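/- arXiv:1611.05740 — 6 statements merged into one kernel-verified Lean document; each statement's English description precedes it below -/
import Mathlib

section
/- Let S be a measurable space, k : S × S → ℝ a bounded symmetric measurable kernel, P and Q probability measures on S, and m, n ≥ 2. On the product space S^m × S^n equipped with the measure P^{⊗m} ⊗ Q^{⊗n}, with coordinates x_1,…,x_m, y_1,…,y_n, the statistic MMD_u²(X_m, Y_n) := (1/(m(m−1))) Σ_{i≠j} k(x_i,x_j) + (1/(n(n−1))) Σ_{i≠j} k(y_i,y_j) − (2/(mn)) Σ_{i=1}^m Σ_{j=1}^n k(x_i,y_j) has expectation equal to MMD²(k; P, Q). -/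
open MeasureTheory ProbabilityTheory

/-- The pushforward of an iid product measure under a single coordinate evaluation is the
base measure. -/
lemma aux_map_eval {S : Type*} [MeasurableSpace S] (P : Measure S) [IsProbabilityMeasure P]
    {m : ℕ} (i : Fin m) :
    Measure.map (fun x : Fin m → S => x i) (Measure.pi fun _ => P) = P := by
  ext s hs
  rw [Measure.map_apply (measurable_pi_apply i) hs]
  have hpre : (fun x : Fin m → S => x i) ⁻¹' s
      = Set.pi Set.univ (fun l => if l = i then s else Set.univ) := by
    ext x
    simp only [Set.mem_preimage, Set.mem_univ_pi]
    constructor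
    · intro h l
      by_cases hl : l = i <;> simp [hl, h]
    · intro h
      have := h i
      simpa using this
  rw [hpre, Measure.pi_pi]
  rw [Finset.prod_eq_single i (fun l _ hl => by simp [hl])
    (fun h => absurd (Finset.mem_univ i) h)]
  simp

/-- The pushforward of an iid product measure under two distinct coordinate evaluations is
the product of two copies of the base measure. -/
lemma aux_map_pair {S : Type*} [MeasurableSpace S] (P : Measure S) [IsProbabilityMeasure P]
    {m : ℕ} {i j : Fin m} (hij : i ≠ j) :
    Measure.map (fun x : Fin m → S => (x i, x j)) (Measure.pi fun _ => P) = P.prod P := by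
  have hmeas : Measurable (fun x : Fin m → S => (x i, x j)) :=
    (measurable_pi_apply i).prodMk (measurable_pi_apply j)
  have : IsProbabilityMeasure
      (Measure.map (fun x : Fin m → S => (x i, x j)) (Measure.pi fun _ => P)) :=
    Measure.isProbabilityMeasure_map hmeas.aemeasurable
  refine (Measure.prod_eq fun s t hs ht => ?_).symm
  rw [Measure.map_apply hmeas (hs.prod ht)]
  have hpre : (fun x : Fin m → S => (x i, x j)) ⁻¹' (s ×ˢ t)
      = Set.pi Set.univ (fun l => if l = i then s else if l = j then t else Set.univ) := by
    ext x
    simp only [Set.mem_preimage, Set.mem_prod, Set.mem_univ_pi]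
    constructor
    · intro h l
      by_cases hl : l = i
      · simp [hl, h.1]
      · by_cases hl' : l = j <;> simp [hl, hl', h.2, hij.symm]
    · intro h
      refine ⟨?_, ?_⟩
      · have := h i; simpa using this
      · have := h j; simpa [hij.symm] using this
  rw [hpre, Measure.pi_pi]
  rw [← Finset.prod_subset (Finset.subset_univ ({i, j} : Finset (Fin m)))
    (fun l _ hl => ?_)]
  · rw [Finset.prod_pair hij]
    simp [hij.symm]
  · simp only [Finset.mem_insert, Finset.mem_singleton, not_or] at hl
    simp [hl.1, hl.2]

/-- **Unbiasedness of the two-sample MMD estimator** (Theorem 2.2, Eq. 12).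
For a bounded symmetric measurable kernel `k` on `S`, probability measures `P, Q`, and
`m, n ≥ 2`, the statistic
`MMD_u²(X, Y) = (1/(m(m−1))) Σ_{i≠j} k(x_i,x_j) + (1/(n(n−1))) Σ_{i≠j} k(y_i,y_j)
  − (2/(mn)) Σ_i Σ_j k(x_i,y_j)`
on `S^m × S^n` with measure `P^{⊗m} ⊗ Q^{⊗n}` has expectation `MMD²(k; P, Q)`. -/
theorem stmt_1
    {S : Type*} [MeasurableSpace S]
    (k : S × S → ℝ) (hk_meas : Measurable k)
    (hk_bdd : ∃ C : ℝ, ∀ p, |k p| ≤ C)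
    (hk_symm : ∀ a b : S, k (a, b) = k (b, a))
    (P Q : Measure S) [IsProbabilityMeasure P] [IsProbabilityMeasure Q]
    (m n : ℕ) (hm : 2 ≤ m) (hn : 2 ≤ n)
    (MMD2 : ℝ)
    (hMMD2 : MMD2 =
      (∫ w, k w ∂(P.prod P)) - 2 * (∫ w, k w ∂(P.prod Q)) + (∫ w, k w ∂(Q.prod Q))) :
    (∫ v : (Fin m → S) × (Fin n → S),
        ((1 / ((m : ℝ) * ((m : ℝ) - 1))) *
            ∑ i, ∑ j, (if i ≠ j then k (v.1 i, v.1 j) else 0)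
          + (1 / ((n : ℝ) * ((n : ℝ) - 1))) *
            ∑ i, ∑ j, (if i ≠ j then k (v.2 i, v.2 j) else 0)
          - (2 / ((m : ℝ) * (n : ℝ))) * ∑ i, ∑ j, k (v.1 i, v.2 j))
      ∂((Measure.pi fun _ : Fin m => P).prod (Measure.pi fun _ : Fin n => Q)))
      = MMD2 := by
  classical
  obtain ⟨C, hC⟩ := hk_bdd
  set μm : Measure (Fin m → S) := Measure.pi fun _ => P with hμm
  set νn : Measure (Fin n → S) := Measure.pi fun _ => Q with hνn
  set ρ : Measure ((Fin m → S) × (Fin n → S)) := μm.prod νn with hρ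
  set IP : ℝ := ∫ w, k w ∂(P.prod P) with hIP
  set IQ : ℝ := ∫ w, k w ∂(Q.prod Q) with hIQ
  set IPQ : ℝ := ∫ w, k w ∂(P.prod Q) with hIPQ
  -- integrability of bounded measurable compositions
  have int_of : ∀ {f : (Fin m → S) × (Fin n → S) → S × S}, Measurable f →
      Integrable (fun v => k (f v)) ρ := by
    intro f hf
    exact (integrable_const C).mono' (hk_meas.comp hf).aestronglyMeasurable
      (Filter.Eventually.of_forall fun v => by simpa [Real.norm_eq_abs] using hC (f v))
  -- the value of a single-pair integral over the first sample
  have hpair1 : ∀ i j : Fin m, i ≠ j →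
      (∫ v : (Fin m → S) × (Fin n → S), k (v.1 i, v.1 j) ∂ρ) = IP := by
    intro i j hij
    have hfst : Measurable (fun x : Fin m → S => (x i, x j)) :=
      (measurable_pi_apply i).prodMk (measurable_pi_apply j)
    have h2 : Measure.map Prod.fst ρ = μm := by
      rw [hρ, Measure.map_fst_prod]
      simp
    calc (∫ v : (Fin m → S) × (Fin n → S), k (v.1 i, v.1 j) ∂ρ)
        = ∫ x : Fin m → S, k (x i, x j) ∂(Measure.map Prod.fst ρ) :=
          (integral_map measurable_fst.aemeasurable
            (hk_meas.comp hfst).aestronglyMeasurable).symm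
      _ = ∫ x : Fin m → S, k (x i, x j) ∂μm := by rw [h2]
      _ = ∫ w, k w ∂(Measure.map (fun x : Fin m → S => (x i, x j)) μm) :=
          (integral_map hfst.aemeasurable hk_meas.aestronglyMeasurable).symm
      _ = IP := by rw [hμm, aux_map_pair P hij]
  have hpair2 : ∀ i j : Fin n, i ≠ j →
      (∫ v : (Fin m → S) × (Fin n → S), k (v.2 i, v.2 j) ∂ρ) = IQ := by
    intro i j hij
    have hsnd : Measurable (fun y : Fin n → S => (y i, y j)) :=
      (measurable_pi_apply i).prodMk (measurable_pi_apply j)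
    have h2 : Measure.map Prod.snd ρ = νn := by
      rw [hρ, Measure.map_snd_prod]
      simp
    calc (∫ v : (Fin m → S) × (Fin n → S), k (v.2 i, v.2 j) ∂ρ)
        = ∫ y : Fin n → S, k (y i, y j) ∂(Measure.map Prod.snd ρ) :=
          (integral_map measurable_snd.aemeasurable
            (hk_meas.comp hsnd).aestronglyMeasurable).symm
      _ = ∫ y : Fin n → S, k (y i, y j) ∂νn := by rw [h2]
      _ = ∫ w, k w ∂(Measure.map (fun y : Fin n → S => (y i, y j)) νn) :=
          (integral_map hsnd.aemeasurable hk_meas.aestronglyMeasurable).symm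
      _ = IQ := by rw [hνn, aux_map_pair Q hij]
  have hcross : ∀ (i : Fin m) (j : Fin n),
      (∫ v : (Fin m → S) × (Fin n → S), k (v.1 i, v.2 j) ∂ρ) = IPQ := by
    intro i j
    have hmap : Measure.map (Prod.map (fun x : Fin m → S => x i) (fun y : Fin n → S => y j)) ρ
        = P.prod Q := by
      rw [hρ, ← Measure.map_prod_map _ _ (measurable_pi_apply i) (measurable_pi_apply j),
        hμm, hνn, aux_map_eval, aux_map_eval]
    have hmeas : Measurable
        (Prod.map (fun x : Fin m → S => x i) (fun y : Fin n → S => y j)) :=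
      ((measurable_pi_apply i).comp measurable_fst).prodMk
        ((measurable_pi_apply j).comp measurable_snd)
    calc (∫ v : (Fin m → S) × (Fin n → S), k (v.1 i, v.2 j) ∂ρ)
        = ∫ w, k w ∂(Measure.map
            (Prod.map (fun x : Fin m → S => x i) (fun y : Fin n → S => y j)) ρ) :=
          (integral_map hmeas.aemeasurable hk_meas.aestronglyMeasurable).symm
      _ = IPQ := by rw [hmap]
  -- measurability of coordinate pair maps
  have hm1 : ∀ i j : Fin m, Measurable (fun v : (Fin m → S) × (Fin n → S) => (v.1 i, v.1 j)) :=
    fun i j => ((measurable_pi_apply i).comp measurable_fst).prodMk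
      ((measurable_pi_apply j).comp measurable_fst)
  have hm2 : ∀ i j : Fin n, Measurable (fun v : (Fin m → S) × (Fin n → S) => (v.2 i, v.2 j)) :=
    fun i j => ((measurable_pi_apply i).comp measurable_snd).prodMk
      ((measurable_pi_apply j).comp measurable_snd)
  have hm3 : ∀ (i : Fin m) (j : Fin n),
      Measurable (fun v : (Fin m → S) × (Fin n → S) => (v.1 i, v.2 j)) :=
    fun i j => ((measurable_pi_apply i).comp measurable_fst).prodMk
      ((measurable_pi_apply j).comp measurable_snd)
  -- integrability of individual terms
  have int1 : ∀ i j : Fin m,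
      Integrable (fun v : (Fin m → S) × (Fin n → S) =>
        if i ≠ j then k (v.1 i, v.1 j) else 0) ρ := by
    intro i j
    by_cases hij : i = j
    · simpa [hij] using (integrable_zero _ ℝ ρ)
    · simpa [hij] using int_of (hm1 i j)
  have int2 : ∀ i j : Fin n,
      Integrable (fun v : (Fin m → S) × (Fin n → S) =>
        if i ≠ j then k (v.2 i, v.2 j) else 0) ρ := by
    intro i j
    by_cases hij : i = j
    · simpa [hij] using (integrable_zero _ ℝ ρ)
    · simpa [hij] using int_of (hm2 i j)
  have int3 : ∀ (i : Fin m) (j : Fin n),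
      Integrable (fun v : (Fin m → S) × (Fin n → S) => k (v.1 i, v.2 j)) ρ :=
    fun i j => int_of (hm3 i j)
  -- integrability of the sums
  have intS1 : Integrable (fun v : (Fin m → S) × (Fin n → S) =>
      ∑ i, ∑ j, (if i ≠ j then k (v.1 i, v.1 j) else 0)) ρ :=
    integrable_finset_sum _ fun i _ => integrable_finset_sum _ fun j _ => int1 i j
  have intS2 : Integrable (fun v : (Fin m → S) × (Fin n → S) =>
      ∑ i, ∑ j, (if i ≠ j then k (v.2 i, v.2 j) else 0)) ρ :=
    integrable_finset_sum _ fun i _ => integrable_finset_sum _ fun j _ => int2 i j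
  have intS3 : Integrable (fun v : (Fin m → S) × (Fin n → S) =>
      ∑ i, ∑ j, k (v.1 i, v.2 j)) ρ :=
    integrable_finset_sum _ fun i _ => integrable_finset_sum _ fun j _ => int3 i j
  -- integrals of the sums
  have hS1 : (∫ v : (Fin m → S) × (Fin n → S),
      ∑ i, ∑ j, (if i ≠ j then k (v.1 i, v.1 j) else 0) ∂ρ)
      = (m : ℝ) * ((m : ℝ) - 1) * IP := by
    rw [integral_finset_sum _ fun i _ => integrable_finset_sum _ fun j _ => int1 i j]
    have : ∀ i : Fin m, (∫ v : (Fin m → S) × (Fin n → S),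
        ∑ j, (if i ≠ j then k (v.1 i, v.1 j) else 0) ∂ρ)
        = ∑ j : Fin m, (if i ≠ j then IP else 0) := by
      intro i
      rw [integral_finset_sum _ fun j _ => int1 i j]
      refine Finset.sum_congr rfl fun j _ => ?_
      by_cases hij : i = j
      · simp [hij]
      · simp only [hij, ne_eq, not_false_iff, if_true]
        exact hpair1 i j hij
    simp_rw [this]
    have hrow : ∀ i : Fin m, (∑ j : Fin m, (if i ≠ j then IP else 0))
        = (m : ℝ) * IP - IP := by
      intro i
      have : ∀ j : Fin m, (if i ≠ j then IP else 0) = IP - (if i = j then IP else 0) := by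
        intro j; by_cases h : i = j <;> simp [h]
      simp_rw [this, Finset.sum_sub_distrib, Finset.sum_ite_eq, Finset.mem_univ, if_pos,
        Finset.sum_const, Finset.card_univ, Fintype.card_fin, nsmul_eq_mul]
    simp_rw [hrow, Finset.sum_const, Finset.card_univ, Fintype.card_fin, nsmul_eq_mul]
    ring
  have hS2 : (∫ v : (Fin m → S) × (Fin n → S),
      ∑ i, ∑ j, (if i ≠ j then k (v.2 i, v.2 j) else 0) ∂ρ)
      = (n : ℝ) * ((n : ℝ) - 1) * IQ := by
    rw [integral_finset_sum _ fun i _ => integrable_finset_sum _ fun j _ => int2 i j]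
    have : ∀ i : Fin n, (∫ v : (Fin m → S) × (Fin n → S),
        ∑ j, (if i ≠ j then k (v.2 i, v.2 j) else 0) ∂ρ)
        = ∑ j : Fin n, (if i ≠ j then IQ else 0) := by
      intro i
      rw [integral_finset_sum _ fun j _ => int2 i j]
      refine Finset.sum_congr rfl fun j _ => ?_
      by_cases hij : i = j
      · simp [hij]
      · simp only [hij, ne_eq, not_false_iff, if_true]
        exact hpair2 i j hij
    simp_rw [this]
    have hrow : ∀ i : Fin n, (∑ j : Fin n, (if i ≠ j then IQ else 0))
        = (n : ℝ) * IQ - IQ := by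
      intro i
      have : ∀ j : Fin n, (if i ≠ j then IQ else 0) = IQ - (if i = j then IQ else 0) := by
        intro j; by_cases h : i = j <;> simp [h]
      simp_rw [this, Finset.sum_sub_distrib, Finset.sum_ite_eq, Finset.mem_univ, if_pos,
        Finset.sum_const, Finset.card_univ, Fintype.card_fin, nsmul_eq_mul]
    simp_rw [hrow, Finset.sum_const, Finset.card_univ, Fintype.card_fin, nsmul_eq_mul]
    ring
  have hS3 : (∫ v : (Fin m → S) × (Fin n → S), ∑ i, ∑ j, k (v.1 i, v.2 j) ∂ρ)
      = (m : ℝ) * (n : ℝ) * IPQ := by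
    rw [integral_finset_sum _ fun i _ => integrable_finset_sum _ fun j _ => int3 i j]
    have : ∀ i : Fin m, (∫ v : (Fin m → S) × (Fin n → S), ∑ j, k (v.1 i, v.2 j) ∂ρ)
        = (n : ℝ) * IPQ := by
      intro i
      rw [integral_finset_sum _ fun j _ => int3 i j]
      simp_rw [hcross i]
      simp [Finset.card_univ, nsmul_eq_mul]
    simp_rw [this]
    simp [Finset.card_univ, nsmul_eq_mul]
    ring
  -- assemble
  have key : (∫ v : (Fin m → S) × (Fin n → S),
        ((1 / ((m : ℝ) * ((m : ℝ) - 1))) *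
            ∑ i, ∑ j, (if i ≠ j then k (v.1 i, v.1 j) else 0)
          + (1 / ((n : ℝ) * ((n : ℝ) - 1))) *
            ∑ i, ∑ j, (if i ≠ j then k (v.2 i, v.2 j) else 0)
          - (2 / ((m : ℝ) * (n : ℝ))) * ∑ i, ∑ j, k (v.1 i, v.2 j)) ∂ρ)
      = (1 / ((m : ℝ) * ((m : ℝ) - 1))) * ((m : ℝ) * ((m : ℝ) - 1) * IP)
        + (1 / ((n : ℝ) * ((n : ℝ) - 1))) * ((n : ℝ) * ((n : ℝ) - 1) * IQ)
        - (2 / ((m : ℝ) * (n : ℝ))) * ((m : ℝ) * (n : ℝ) * IPQ) := by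
    have I1 : Integrable (fun v : (Fin m → S) × (Fin n → S) =>
        (1 / ((m : ℝ) * ((m : ℝ) - 1))) *
          ∑ i, ∑ j, (if i ≠ j then k (v.1 i, v.1 j) else 0)) ρ := intS1.const_mul _
    have I2 : Integrable (fun v : (Fin m → S) × (Fin n → S) =>
        (1 / ((n : ℝ) * ((n : ℝ) - 1))) *
          ∑ i, ∑ j, (if i ≠ j then k (v.2 i, v.2 j) else 0)) ρ := intS2.const_mul _
    have I3 : Integrable (fun v : (Fin m → S) × (Fin n → S) =>
        (2 / ((m : ℝ) * (n : ℝ))) * ∑ i, ∑ j, k (v.1 i, v.2 j)) ρ := intS3.const_mul _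
    have I12 : Integrable (fun v : (Fin m → S) × (Fin n → S) =>
        (1 / ((m : ℝ) * ((m : ℝ) - 1))) *
            ∑ i, ∑ j, (if i ≠ j then k (v.1 i, v.1 j) else 0)
          + (1 / ((n : ℝ) * ((n : ℝ) - 1))) *
            ∑ i, ∑ j, (if i ≠ j then k (v.2 i, v.2 j) else 0)) ρ := I1.add I2
    rw [integral_sub I12 I3, integral_add I1 I2,
      integral_const_mul, integral_const_mul, integral_const_mul, hS1, hS2, hS3]
  rw [key, hMMD2]
  have hm2r : (2 : ℝ) ≤ (m : ℝ) := by exact_mod_cast hm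
  have hm0 : (m : ℝ) ≠ 0 := by linarith
  have hm1' : (m : ℝ) - 1 ≠ 0 := by
    have : (2 : ℝ) ≤ (m : ℝ) := by exact_mod_cast hm
    linarith
  have hn2r : (2 : ℝ) ≤ (n : ℝ) := by exact_mod_cast hn
  have hn0 : (n : ℝ) ≠ 0 := by linarith
  have hn1' : (n : ℝ) - 1 ≠ 0 := by
    have : (2 : ℝ) ≤ (n : ℝ) := by exact_mod_cast hn
    linarith
  field_simp
  ring
end

section
/- Let S be a measurable space, k : S × S → ℝ a bounded symmetric measurable kernel, P and Q probability measures on S, and m ≥ 2. Let v_1,…,v_m with v_i = (x_i, y_i) be i.i.d. with law P ⊗ Q, and define f(v_i, v_j) := k(x_i,x_j) + k(y_i,y_j) − k(x_i,y_j) − k(x_j,y_i). Then the U-statistic (1/(m(m−1))) Σ_{i≠j} f(v_i, v_j) has expectation equal to MMD²(k; P, Q). -/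
open MeasureTheory ProbabilityTheory

/-!
The coordinates of a product measure are independent, so for `i ≠ j` the pair `(v i, v j)` has
law `(P ⊗ Q) ⊗ (P ⊗ Q)` and each of the `m (m - 1)` off-diagonal terms has the same expectation.
Projecting onto the relevant coordinates, the four kernel terms of `f` have laws `P ⊗ P`,
`Q ⊗ Q`, `P ⊗ Q` and `P ⊗ Q`, which gives `MMD²`.
-/

theorem MeasureTheory.MeasurePreserving.integral_comp_of_aestronglyMeasurable
    {α β E : Type*} [MeasurableSpace α] [MeasurableSpace β] [NormedAddCommGroup E]
    [NormedSpace ℝ E] {μ : Measure α} {ν : Measure β} {φ : α → β}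
    (hφ : MeasurePreserving φ μ ν) {g : β → E} (hg : AEStronglyMeasurable g ν) :
    ∫ x, g (φ x) ∂μ = ∫ y, g y ∂ν := by
  rw [← hφ.map_eq] at hg ⊢
  exact (integral_map hφ.measurable.aemeasurable hg).symm

theorem MeasureTheory.Measure.map_eval_prodMk_pi {ι : Type*} [Fintype ι] {α : ι → Type*}
    [∀ i, MeasurableSpace (α i)] (μ : ∀ i, Measure (α i)) [∀ i, IsProbabilityMeasure (μ i)]
    {i j : ι} (hij : i ≠ j) :
    (Measure.pi μ).map (fun v => (v i, v j)) = (μ i).prod (μ j) := by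
  have hind : (fun v : ∀ i, α i => v i) ⟂ᵢ[Measure.pi μ] (fun v => v j) :=
    (iIndepFun_pi (X := fun _ x => x) fun _ => aemeasurable_id).indepFun hij
  rw [(indepFun_iff_map_prod_eq_prod_map_map (measurable_pi_apply i).aemeasurable
      (measurable_pi_apply j).aemeasurable).1 hind,
    (measurePreserving_eval μ i).map_eq, (measurePreserving_eval μ j).map_eq]

theorem integral_sum_offDiag_pi {α : Type*} [MeasurableSpace α] (μ : Measure α)
    [IsProbabilityMeasure μ] {ι : Type*} [Fintype ι] [DecidableEq ι] {g : α → α → ℝ}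
    (hg : Integrable (Function.uncurry g) (μ.prod μ)) :
    ∫ v : ι → α, ∑ i, ∑ j, (if i ≠ j then g (v i) (v j) else 0) ∂Measure.pi (fun _ => μ)
      = Fintype.card ι * (Fintype.card ι - 1) * ∫ w, g w.1 w.2 ∂μ.prod μ := by
  have hpair : ∀ i j : ι, i ≠ j → MeasurePreserving (fun v : ι → α => (v i, v j))
      (Measure.pi fun _ => μ) (μ.prod μ) :=
    fun i j hij => ⟨by fun_prop, Measure.map_eval_prodMk_pi _ hij⟩
  have hint : ∀ i j : ι, Integrable
      (fun v : ι → α => if i ≠ j then g (v i) (v j) else 0) (Measure.pi fun _ => μ) := by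
    intro i j
    split_ifs with hij
    · exact (hpair i j hij).integrable_comp_of_integrable hg
    · exact integrable_zero _ _ _
  have hterm : ∀ i j : ι, ∫ v : ι → α, (if i ≠ j then g (v i) (v j) else 0)
      ∂Measure.pi (fun _ => μ) = if i ≠ j then ∫ w, g w.1 w.2 ∂μ.prod μ else 0 := by
    intro i j
    split_ifs with hij
    · exact (hpair i j hij).integral_comp_of_aestronglyMeasurable hg.aestronglyMeasurable
    · exact integral_zero _ _
  rw [integral_finsetSum _ fun i _ => integrable_finsetSum _ fun j _ => hint i j]
  simp_rw [integral_finsetSum _ fun j _ => hint _ j, hterm]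
  simp only [Finset.sum_ite, Finset.sum_const_zero, add_zero, Finset.sum_const, Finset.filter_ne,
    Finset.mem_univ, Finset.card_erase_of_mem, Finset.card_univ, nsmul_eq_mul]
  rcases (Fintype.card ι).eq_zero_or_pos with hcard | hcard
  · simp [hcard]
  · rw [Nat.cast_pred hcard]
    ring

def mmdCore {S : Type*} (k : S × S → ℝ) (v v' : S × S) : ℝ :=
  k (v.1, v'.1) + k (v.2, v'.2) - k (v.1, v'.2) - k (v'.1, v.2)

theorem abs_mmdCore_le {S : Type*} {k : S × S → ℝ} {C : ℝ} (hC : ∀ p, |k p| ≤ C)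
    (v v' : S × S) : |mmdCore k v v'| ≤ 4 * C := by
  have h₁ := abs_le.1 (hC (v.1, v'.1))
  have h₂ := abs_le.1 (hC (v.2, v'.2))
  have h₃ := abs_le.1 (hC (v.1, v'.2))
  have h₄ := abs_le.1 (hC (v'.1, v.2))
  rw [mmdCore, abs_le]
  constructor <;> linarith

theorem integral_mmdCore {S : Type*} [MeasurableSpace S] {k : S × S → ℝ}
    {P Q : Measure S} [IsProbabilityMeasure P] [IsProbabilityMeasure Q]
    (hPP : Integrable k (P.prod P)) (hPQ : Integrable k (P.prod Q))
    (hQQ : Integrable k (Q.prod Q)) :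
    ∫ w, mmdCore k w.1 w.2 ∂(P.prod Q).prod (P.prod Q)
      = ∫ w, k w ∂P.prod P - 2 * ∫ w, k w ∂P.prod Q + ∫ w, k w ∂Q.prod Q := by
  set μ := P.prod Q
  have h₁ : MeasurePreserving (fun w : (S × S) × (S × S) => (w.1.1, w.2.1))
      (μ.prod μ) (P.prod P) := measurePreserving_fst.prod measurePreserving_fst
  have h₂ : MeasurePreserving (fun w : (S × S) × (S × S) => (w.1.2, w.2.2))
      (μ.prod μ) (Q.prod Q) := measurePreserving_snd.prod measurePreserving_snd
  have h₃ : MeasurePreserving (fun w : (S × S) × (S × S) => (w.1.1, w.2.2))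
      (μ.prod μ) (P.prod Q) := measurePreserving_fst.prod measurePreserving_snd
  have h₄ : MeasurePreserving (fun w : (S × S) × (S × S) => (w.2.1, w.1.2))
      (μ.prod μ) (P.prod Q) := h₃.comp Measure.measurePreserving_swap
  have i₁ : Integrable (fun w => k (w.1.1, w.2.1)) (μ.prod μ) :=
    h₁.integrable_comp_of_integrable hPP
  have i₂ : Integrable (fun w => k (w.1.2, w.2.2)) (μ.prod μ) :=
    h₂.integrable_comp_of_integrable hQQ
  have i₃ : Integrable (fun w => k (w.1.1, w.2.2)) (μ.prod μ) :=
    h₃.integrable_comp_of_integrable hPQ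
  have i₄ : Integrable (fun w => k (w.2.1, w.1.2)) (μ.prod μ) :=
    h₄.integrable_comp_of_integrable hPQ
  simp only [mmdCore]
  rw [integral_sub _ i₄, integral_sub _ i₃, integral_add i₁ i₂,
    h₁.integral_comp_of_aestronglyMeasurable hPP.aestronglyMeasurable,
    h₂.integral_comp_of_aestronglyMeasurable hQQ.aestronglyMeasurable,
    h₃.integral_comp_of_aestronglyMeasurable hPQ.aestronglyMeasurable,
    h₄.integral_comp_of_aestronglyMeasurable hPQ.aestronglyMeasurable]
  · ring
  · exact i₁.add i₂
  · exact (i₁.add i₂).sub i₃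

theorem stmt_2_general
    {S : Type*} [MeasurableSpace S]
    (k : S × S → ℝ) (hk_meas : Measurable k)
    (hk_bdd : ∃ C : ℝ, ∀ p, |k p| ≤ C)
    (P Q : Measure S) [IsProbabilityMeasure P] [IsProbabilityMeasure Q]
    (m : ℕ) (hm : 2 ≤ m)
    (f : S × S → S × S → ℝ)
    (hf : ∀ v v' : S × S,
      f v v' = k (v.1, v'.1) + k (v.2, v'.2) - k (v.1, v'.2) - k (v'.1, v.2))
    (MMD2 : ℝ)
    (hMMD2 : MMD2 =
      (∫ w, k w ∂(P.prod P)) - 2 * (∫ w, k w ∂(P.prod Q)) + (∫ w, k w ∂(Q.prod Q))) :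
    (∫ v : Fin m → S × S,
        (1 / ((m : ℝ) * ((m : ℝ) - 1))) *
          ∑ i, ∑ j, (if i ≠ j then f (v i) (v j) else 0)
      ∂(Measure.pi fun _ : Fin m => P.prod Q))
      = MMD2 := by
  obtain ⟨C, hC⟩ := hk_bdd
  obtain rfl : f = mmdCore k := funext₂ hf
  have hk_int (ρ : Measure (S × S)) [IsFiniteMeasure ρ] : Integrable k ρ :=
    .of_bound hk_meas.aestronglyMeasurable C (ae_of_all _ hC)
  have hcore_int : Integrable (Function.uncurry (mmdCore k)) ((P.prod Q).prod (P.prod Q)) :=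
    .of_bound (by unfold Function.uncurry mmdCore; fun_prop) (4 * C)
      (ae_of_all _ fun w => abs_mmdCore_le hC w.1 w.2)
  have hm' : (2 : ℝ) ≤ m := by exact_mod_cast hm
  rw [integral_const_mul, integral_sum_offDiag_pi _ hcore_int,
    integral_mmdCore (hk_int _) (hk_int _) (hk_int _), hMMD2, Fintype.card_fin]
  field_simp [show (m : ℝ) - 1 ≠ 0 by linarith, show (m : ℝ) ≠ 0 by linarith]

/-- **Unbiasedness of the equal-sample-size MMD U-statistic** (Theorem 2.2, Eq. 13).
With `v_i = (x_i, y_i)` i.i.d. with law `P ⊗ Q` and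
`f(v, v') = k(x,x') + k(y,y') − k(x,y') − k(x',y)`,
the U-statistic `(1/(m(m−1))) Σ_{i≠j} f(v_i, v_j)` has expectation `MMD²(k; P, Q)`. -/
theorem stmt_2
    {S : Type*} [MeasurableSpace S]
    (k : S × S → ℝ) (hk_meas : Measurable k)
    (hk_bdd : ∃ C : ℝ, ∀ p, |k p| ≤ C)
    (hk_symm : ∀ a b : S, k (a, b) = k (b, a))
    (P Q : Measure S) [IsProbabilityMeasure P] [IsProbabilityMeasure Q]
    (m : ℕ) (hm : 2 ≤ m)
    (f : S × S → S × S → ℝ)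
    (hf : ∀ v v' : S × S,
      f v v' = k (v.1, v'.1) + k (v.2, v'.2) - k (v.1, v'.2) - k (v'.1, v.2))
    (MMD2 : ℝ)
    (hMMD2 : MMD2 =
      (∫ w, k w ∂(P.prod P)) - 2 * (∫ w, k w ∂(P.prod Q)) + (∫ w, k w ∂(Q.prod Q))) :
    (∫ v : Fin m → S × S,
        (1 / ((m : ℝ) * ((m : ℝ) - 1))) *
          ∑ i, ∑ j, (if i ≠ j then f (v i) (v j) else 0)
      ∂(Measure.pi fun _ : Fin m => P.prod Q))
      = MMD2 :=
  stmt_2_general k hk_meas hk_bdd P Q m hm f hf MMD2 hMMD2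
end

section
/- Let m ≥ 4 and let K̃, L̃ ∈ ℝ^{m×m} be symmetric matrices with zero diagonal. For pairwise distinct indices i, j, q, r ∈ {1,…,m} define h_{ijqr} := (1/24) Σ_{(s,t,u,v)} K̃_{st}(L̃_{st} + L̃_{uv} − 2 L̃_{su}), the sum over all 24 permutations (s,t,u,v) of (i,j,q,r). Then (1/(m(m−3))) [ Tr(K̃ L̃) + (𝟙ᵀK̃𝟙)(𝟙ᵀL̃𝟙)/((m−1)(m−2)) − (2/(m−2)) 𝟙ᵀK̃L̃𝟙 ] = ((m−4)!/m!) Σ_{(i,j,q,r) pairwise distinct} h_{ijqr}, where 𝟙 ∈ ℝ^m is the all-ones vector. -/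
/-!
Averaging a function over the `4!` reorderings of its argument does not change its sum over
injective `4`-tuples, so `h_{ijqr}` may be replaced by its unsymmetrised summand
`K̃_{ij}(L̃_{ij} + L̃_{qr} − 2 L̃_{iq})`. Summing out `r ∉ {i, j, q}` and then `q ∉ {i, j}`, the
zero diagonals and the symmetry turn every excluded index into a row sum, and the sum over
pairwise distinct indices becomes
`(m−1)(m−2) Tr(K̃L̃) + (𝟙ᵀK̃𝟙)(𝟙ᵀL̃𝟙) − 2(m−1) 𝟙ᵀK̃L̃𝟙`;
dividing by `m!/(m−4)! = m(m−1)(m−2)(m−3)` gives the matrix form.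
-/

open Matrix Finset

section Tuples

variable {α M : Type*} [Fintype α] [AddCommMonoid M]

theorem sum_fun_fin_succ {n : ℕ} (f : (Fin (n + 1) → α) → M) :
    ∑ v, f v = ∑ a, ∑ w : Fin n → α, f (Fin.cons a w) := by
  rw [← Fintype.sum_prod_type', ← (Fin.consEquiv fun _ => α).sum_comp]
  rfl

theorem sum_fun_fin_four (f : (Fin 4 → α) → M) :
    ∑ v, f v = ∑ i, ∑ j, ∑ q, ∑ r, f ![i, j, q, r] := by
  simp only [sum_fun_fin_succ, Fintype.sum_unique]
  rfl

theorem sum_sum_comp_perm {ι : Type*} [Fintype ι] [DecidableEq ι] (g : (ι → α) → M) :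
    ∑ v : ι → α, ∑ σ : Equiv.Perm ι, g (v ∘ σ) = Fintype.card (Equiv.Perm ι) • ∑ v, g v := by
  rw [Finset.sum_comm, ← Finset.card_univ, ← Finset.sum_const]
  exact sum_congr rfl fun σ _ => (σ.symm.arrowCongr (Equiv.refl α)).sum_comp g

end Tuples

theorem injective_vecFour_iff {α : Type*} {i j q r : α} :
    Function.Injective ![i, j, q, r] ↔
      i ≠ j ∧ i ≠ q ∧ i ≠ r ∧ j ≠ q ∧ j ≠ r ∧ q ≠ r := by
  simp only [Matrix.vecCons, Fin.cons_injective_iff]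
  simp [Function.Injective, eq_iff_true_of_subsingleton]
  tauto

theorem sum_ite_injective_mean_comp_perm {ι α R : Type*} [Fintype ι] [DecidableEq ι]
    [Fintype α] [DecidableEq α] [Field R] [CharZero R] (F : (ι → α) → R) :
    ∑ v : ι → α, (if Function.Injective v then
        (Fintype.card (Equiv.Perm ι) : R)⁻¹ * ∑ σ : Equiv.Perm ι, F (v ∘ σ) else 0)
      = ∑ v, if Function.Injective v then F v else 0 := by
  set G : (ι → α) → R := fun v => if Function.Injective v then F v else 0
  have hG : ∀ v : ι → α, (if Function.Injective v then
      (Fintype.card (Equiv.Perm ι) : R)⁻¹ * ∑ σ : Equiv.Perm ι, F (v ∘ σ) else 0)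
        = (Fintype.card (Equiv.Perm ι) : R)⁻¹ * ∑ σ : Equiv.Perm ι, G (v ∘ σ) := by
    intro v
    simp only [G, Equiv.injective_comp]
    split_ifs <;> simp
  rw [sum_congr rfl fun v _ => hG v, ← mul_sum, sum_sum_comp_perm, nsmul_eq_mul,
    inv_mul_cancel_left₀ (Nat.cast_ne_zero.mpr Fintype.card_ne_zero)]

section Complements

variable {α M : Type*} [Fintype α] [DecidableEq α]

theorem sum_compl_eq_sub [AddCommGroup M] (s : Finset α) (f : α → M) :
    ∑ x ∈ sᶜ, f x = ∑ x, f x - ∑ x ∈ s, f x :=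
  eq_sub_of_add_eq (sum_compl_add_sum s f)

variable [AddCommMonoid M]

theorem sum_compl_eq_sum_ite_notMem (s : Finset α) (f : α → M) :
    ∑ x ∈ sᶜ, f x = ∑ x, if x ∉ s then f x else 0 := by
  rw [← sum_filter]
  congr
  ext
  simp

theorem sum_ite_pairwise_ne_eq_sum_compl (F : α → α → α → α → M) :
    ∑ i, ∑ j, ∑ q, ∑ r,
        (if i ≠ j ∧ i ≠ q ∧ i ≠ r ∧ j ≠ q ∧ j ≠ r ∧ q ≠ r then F i j q r else 0)
      = ∑ i, ∑ j ∈ {i}ᶜ, ∑ q ∈ {i, j}ᶜ, ∑ r ∈ {i, j, q}ᶜ, F i j q r := by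
  simp only [sum_compl_eq_sum_ite_notMem, ite_sum_zero, ← ite_and]
  refine sum_congr rfl fun i _ => sum_congr rfl fun j _ => sum_congr rfl fun q _ =>
    sum_congr rfl fun r _ => if_congr ?_ rfl rfl
  simp only [mem_insert, mem_singleton]
  tauto

end Complements

section HSIC

variable {α R : Type*} [Fintype α] [CommRing R] {K L : Matrix α α R}

theorem trace_mul_eq_sum_sum_mul_of_isSymm (hL : L.IsSymm) :
    trace (K * L) = ∑ i, ∑ j, K i j * L i j := by
  simp only [trace, diag_apply, mul_apply, hL.apply]

theorem sum_sum_mul_apply (K L : Matrix α α R) :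
    ∑ i, ∑ j, (K * L) i j = ∑ i, ∑ j, K i j * ∑ k, L j k := by
  simp only [mul_apply, mul_sum]
  exact sum_congr rfl fun i _ => sum_comm

/-- The summand of the U-statistic before symmetrisation over the orderings of `(i, j, q, r)`. -/
def hsicTerm (K L : Matrix α α R) (i j q r : α) : R :=
  K i j * (L i j + L q r - 2 * L i q)

variable [DecidableEq α]

theorem sum_compl_sum_compl_hsicTerm (hL : L.IsSymm) (hL0 : ∀ i, L i i = 0) {i j : α}
    (hij : i ≠ j) :
    ∑ q ∈ {i, j}ᶜ, ∑ r ∈ {i, j, q}ᶜ, hsicTerm K L i j q r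
      = K i j * ((Fintype.card α - 1) * (Fintype.card α - 2) * L i j + ∑ q, ∑ r, L q r
          - 2 * (Fintype.card α - 2) * ∑ r, L i r - 2 * ∑ r, L j r) := by
  have inner : ∀ q ∈ ({i, j}ᶜ : Finset α), ∑ r ∈ {i, j, q}ᶜ, hsicTerm K L i j q r
      = K i j * ((Fintype.card α - 3) * (L i j - 2 * L i q) + ∑ r, L q r - L i q - L j q) := by
    intro q hq
    obtain ⟨hiq, hjq⟩ : i ≠ q ∧ j ≠ q := by simpa [eq_comm] using hq
    rw [sum_compl_eq_sub, sum_insert (by simp [hij, hiq]), sum_pair hjq]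
    simp only [hsicTerm, ← mul_sum, sum_add_distrib, sum_sub_distrib, sum_const, card_univ,
      nsmul_eq_mul]
    rw [hL0, hL.apply i q, hL.apply j q]
    ring
  rw [sum_congr rfl inner, sum_compl_eq_sub, sum_pair hij]
  simp only [← mul_sum, sum_add_distrib, sum_sub_distrib, sum_const, card_univ, nsmul_eq_mul]
  rw [hL0, hL0, hL.apply j i]
  ring

theorem sum_pairwise_ne_hsicTerm (hK : K.IsSymm) (hL : L.IsSymm) (hK0 : ∀ i, K i i = 0)
    (hL0 : ∀ i, L i i = 0) :
    ∑ i, ∑ j, ∑ q, ∑ r, (if i ≠ j ∧ i ≠ q ∧ i ≠ r ∧ j ≠ q ∧ j ≠ r ∧ q ≠ r then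
        hsicTerm K L i j q r else 0)
      = (Fintype.card α - 1) * (Fintype.card α - 2) * trace (K * L)
        + (∑ i, ∑ j, K i j) * (∑ i, ∑ j, L i j)
        - 2 * (Fintype.card α - 1) * ∑ i, ∑ j, (K * L) i j := by
  have sum_compl_singleton : ∀ i, ∑ j ∈ {i}ᶜ, ∑ q ∈ {i, j}ᶜ, ∑ r ∈ {i, j, q}ᶜ,
      hsicTerm K L i j q r
        = ∑ j, K i j * ((Fintype.card α - 1) * (Fintype.card α - 2) * L i j
          + ∑ q, ∑ r, L q r - 2 * (Fintype.card α - 2) * ∑ r, L i r - 2 * ∑ r, L j r) := by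
    intro i
    rw [sum_congr rfl fun j hj =>
        sum_compl_sum_compl_hsicTerm hL hL0 (by simpa [eq_comm] using hj),
      sum_compl_eq_sub, sum_singleton, hK0, zero_mul, sub_zero]
  have row_sums : ∑ i, ∑ j, K i j * ∑ r, L i r = ∑ i, ∑ j, K i j * ∑ r, L j r := by
    rw [sum_comm]
    simp only [hK.apply]
  rw [sum_ite_pairwise_ne_eq_sum_compl, sum_congr rfl fun i _ => sum_compl_singleton i,
    trace_mul_eq_sum_sum_mul_of_isSymm hL, sum_sum_mul_apply]
  simp only [mul_add, mul_sub, sum_add_distrib, sum_sub_distrib, mul_left_comm (K _ _),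
    ← mul_sum, sum_mul]
  rw [row_sums]
  ring

end HSIC

theorem factorial_sub_four_div_factorial {m : ℕ} (hm : 4 ≤ m) :
    ((m - 4).factorial : ℝ) / m.factorial = 1 / (m * (m - 1) * (m - 2) * (m - 3)) := by
  obtain ⟨n, rfl⟩ := Nat.exists_eq_add_of_le' hm
  simp only [Nat.add_sub_cancel, Nat.factorial_succ]
  push_cast
  rw [div_eq_div_iff (by positivity) (by ring_nf; positivity)]
  ring

/-- **Matrix form vs. U-statistic form of the unbiased HSIC estimator** (Theorem 2.3,
Eqs. 11–12). For `m ≥ 4` and symmetric matrices `K̃, L̃ ∈ ℝ^{m×m}` with zero diagonal,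
`(1/(m(m−3))) [Tr(K̃L̃) + (𝟙ᵀK̃𝟙)(𝟙ᵀL̃𝟙)/((m−1)(m−2)) − (2/(m−2)) 𝟙ᵀK̃L̃𝟙]`
equals `((m−4)!/m!) Σ_{(i,j,q,r) pairwise distinct} h_{ijqr}`, where
`h_{ijqr} = (1/24) Σ_{(s,t,u,v) perm of (i,j,q,r)} K̃_{st}(L̃_{st} + L̃_{uv} − 2 L̃_{su})`. -/
theorem stmt_5
    (m : ℕ) (hm : 4 ≤ m)
    (K L : Matrix (Fin m) (Fin m) ℝ)
    (hK_symm : K.IsSymm) (hL_symm : L.IsSymm)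
    (hK_diag : ∀ i, K i i = 0) (hL_diag : ∀ i, L i i = 0) :
    (1 / ((m : ℝ) * ((m : ℝ) - 3))) *
        (Matrix.trace (K * L)
          + (∑ i, ∑ j, K i j) * (∑ i, ∑ j, L i j) / (((m : ℝ) - 1) * ((m : ℝ) - 2))
          - (2 / ((m : ℝ) - 2)) * ∑ i, ∑ j, (K * L) i j)
      = ((Nat.factorial (m - 4) : ℝ) / (Nat.factorial m : ℝ)) *
          ∑ i, ∑ j, ∑ q, ∑ r,
            (if i ≠ j ∧ i ≠ q ∧ i ≠ r ∧ j ≠ q ∧ j ≠ r ∧ q ≠ r then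
              (1 / 24) * ∑ σ : Equiv.Perm (Fin 4),
                K (![i, j, q, r] (σ 0)) (![i, j, q, r] (σ 1)) *
                  (L (![i, j, q, r] (σ 0)) (![i, j, q, r] (σ 1))
                    + L (![i, j, q, r] (σ 2)) (![i, j, q, r] (σ 3))
                    - 2 * L (![i, j, q, r] (σ 0)) (![i, j, q, r] (σ 2)))
            else 0) := by
  have hsym := sum_ite_injective_mean_comp_perm fun v : Fin 4 → Fin m =>
    hsicTerm K L (v 0) (v 1) (v 2) (v 3)
  simp only [Fintype.card_perm, Fintype.card_fin, sum_fun_fin_four, injective_vecFour_iff,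
    show ((Nat.factorial 4 : ℕ) : ℝ)⁻¹ = 1 / 24 by norm_num [Nat.factorial]] at hsym
  have hm' : (4 : ℝ) ≤ m := by exact_mod_cast hm
  calc _ = ((Nat.factorial (m - 4) : ℝ) / (Nat.factorial m : ℝ)) *
        ∑ i, ∑ j, ∑ q, ∑ r, (if i ≠ j ∧ i ≠ q ∧ i ≠ r ∧ j ≠ q ∧ j ≠ r ∧ q ≠ r then
          hsicTerm K L i j q r else 0) := by
        rw [sum_pairwise_ne_hsicTerm hK_symm hL_symm hK_diag hL_diag, Fintype.card_fin,
          factorial_sub_four_div_factorial hm]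
        have h1 : (m : ℝ) - 1 ≠ 0 := by linarith
        have h2 : (m : ℝ) - 2 ≠ 0 := by linarith
        have h3 : (m : ℝ) - 3 ≠ 0 := by linarith
        field_simp
    -- `hsym` is the goal up to unfolding `hsicTerm` and evaluating `![i, j, q, r]`
    _ = _ := congrArg _ hsym.symm
end

section
/- Let Φ denote the cumulative distribution function of the standard Gaussian measure N(0,1) on ℝ. Let H and G be square-integrable real-valued random variables with σ_d := √(Var(H) + Var(G) − 2 Cov(H,G)) > 0 and σ_i := √(2 Var(H) + 2 Var(G)). Then for every t ∈ ℝ and every Δ ≥ 0, Φ(t − Δ/σ_d) ≤ Φ(t − Δ/σ_i); moreover, if Δ > 0 and Var(H + G) > 0, the inequality is strict. -/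
open MeasureTheory ProbabilityTheory

/-! Polarisation gives `Var(H + G) = Var H + Var G + 2 Cov(H, G)`, hence
`σ_i² = σ_d² + Var(H + G) ≥ σ_d²`. So `Δ / σ_i ≤ Δ / σ_d`, and `Φ` is monotone; it is strictly
monotone because Lebesgue measure is absolutely continuous with respect to `N(0, 1)`. -/

lemma strictMono_cdf_of_absolutelyContinuous (ν : Measure ℝ) [IsProbabilityMeasure ν]
    (hν : volume ≪ ν) : StrictMono (cdf ν) := by
  intro a b hab
  have hIoc : ν (Set.Ioc a b) ≠ 0 := fun h ↦
    ((Measure.measure_Ioo_pos volume).mpr hab).ne'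
      (hν (measure_mono_null Set.Ioo_subset_Ioc_self h))
  rw [← measure_cdf ν, StieltjesFunction.measure_Ioc, ne_eq, ENNReal.ofReal_eq_zero,
    not_le, sub_pos] at hIoc
  exact hIoc

lemma strictMono_cdf_gaussianReal (m : ℝ) {v : NNReal} (hv : v ≠ 0) :
    StrictMono (cdf (gaussianReal m v)) :=
  strictMono_cdf_of_absolutelyContinuous _ (gaussianReal_absolutelyContinuous' m hv)

lemma integral_sq_sub_integral_add {Ω : Type*} [MeasurableSpace Ω] {μ : Measure Ω}
    [IsFiniteMeasure μ] {X Y : Ω → ℝ} (hX : MemLp X 2 μ) (hY : MemLp Y 2 μ) :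
    ∫ ω, ((X ω + Y ω) - ∫ ω', (X ω' + Y ω') ∂μ) ^ 2 ∂μ =
      ∫ ω, (X ω - ∫ ω', X ω' ∂μ) ^ 2 ∂μ + ∫ ω, (Y ω - ∫ ω', Y ω' ∂μ) ^ 2 ∂μ +
        2 * ∫ ω, (X ω - ∫ ω', X ω' ∂μ) * (Y ω - ∫ ω', Y ω' ∂μ) ∂μ := by
  have h := variance_add hX hY
  rw [variance_eq_integral (hX.add hY).aestronglyMeasurable.aemeasurable,
    variance_eq_integral hX.aestronglyMeasurable.aemeasurable,
    variance_eq_integral hY.aestronglyMeasurable.aemeasurable, covariance] at h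
  simp only [Pi.add_apply] at h
  linarith

/-- **The dependent test is more powerful** (Theorem 3.4).
With `Φ` the standard Gaussian CDF, `σ_d = √(Var H + Var G − 2 Cov(H,G)) > 0` and
`σ_i = √(2 Var H + 2 Var G)`, for every `t` and every `Δ ≥ 0`,
`Φ(t − Δ/σ_d) ≤ Φ(t − Δ/σ_i)`, with strict inequality when `Δ > 0` and `Var(H+G) > 0`. -/
theorem stmt_12
    {Ω : Type*} [MeasurableSpace Ω] (μ : Measure Ω) [IsProbabilityMeasure μ]
    (H G : Ω → ℝ) (hH : MemLp H 2 μ) (hG : MemLp G 2 μ)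
    (Φ : ℝ → ℝ) (hΦ : ∀ t, Φ t = ProbabilityTheory.cdf (gaussianReal 0 1) t)
    (varH varG varHG cov : ℝ)
    (hvarH : varH = ∫ ω, (H ω - ∫ ω', H ω' ∂μ) ^ 2 ∂μ)
    (hvarG : varG = ∫ ω, (G ω - ∫ ω', G ω' ∂μ) ^ 2 ∂μ)
    (hvarHG : varHG = ∫ ω, ((H ω + G ω) - ∫ ω', (H ω' + G ω') ∂μ) ^ 2 ∂μ)
    (hcov : cov = ∫ ω, (H ω - ∫ ω', H ω' ∂μ) * (G ω - ∫ ω', G ω' ∂μ) ∂μ)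
    (σd σi : ℝ)
    (hσd : σd = Real.sqrt (varH + varG - 2 * cov))
    (hσi : σi = Real.sqrt (2 * varH + 2 * varG))
    (hσd_pos : 0 < σd) :
    ∀ t Δ : ℝ, 0 ≤ Δ →
      Φ (t - Δ / σd) ≤ Φ (t - Δ / σi) ∧
        (0 < Δ → 0 < varHG → Φ (t - Δ / σd) < Φ (t - Δ / σi)) := by
  have hσi_eq : σi = Real.sqrt ((varH + varG - 2 * cov) + varHG) := by
    rw [hσi, hvarHG, integral_sq_sub_integral_add hH hG, ← hvarH, ← hvarG, ← hcov]
    ring_nf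
  have hvarHG_nonneg : 0 ≤ varHG := hvarHG ▸ integral_nonneg fun _ ↦ sq_nonneg _
  have hσd_sq_pos : 0 < varH + varG - 2 * cov := Real.sqrt_pos.mp (hσd ▸ hσd_pos)
  have hσ_le : σd ≤ σi := hσd ▸ hσi_eq ▸ Real.sqrt_le_sqrt (by linarith)
  intro t Δ hΔ
  simp only [hΦ]
  refine ⟨monotone_cdf _ (by gcongr), fun hΔ_pos hvarHG_pos ↦ ?_⟩
  have hσ_lt : σd < σi := hσd ▸ hσi_eq ▸ Real.sqrt_lt_sqrt hσd_sq_pos.le (by linarith)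
  exact strictMono_cdf_gaussianReal 0 one_ne_zero (by gcongr)
end

section
/- Let Hb be a real Hilbert space, S a measurable space, φ : S → Hb strongly measurable, and P_x, P_y, P_z probability measures on S such that x ↦ ‖φ(x)‖ is square-integrable with respect to each of them. Set μ_x := ∫ φ dP_x, μ_y := ∫ φ dP_y, μ_z := ∫ φ dP_z. Let (x, y, z) have law P_x ⊗ P_y ⊗ P_z and define D := (⟪φ(y),μ_y⟫ − ⟪φ(x),μ_y⟫ − ⟪μ_x,φ(y)⟫) − (⟪φ(z),μ_z⟫ − ⟪φ(x),μ_z⟫ − ⟪μ_x,φ(z)⟫). Then Var(D) = Var(⟪φ(y),μ_y⟫) + Var(⟪φ(x),μ_y⟫) + Var(⟪μ_x,φ(y)⟫) + Var(⟪φ(z),μ_z⟫) + Var(⟪φ(x),μ_z⟫) + Var(⟪μ_x,φ(z)⟫) − 2 Cov(⟪φ(y),μ_y⟫, ⟪μ_x,φ(y)⟫) − 2 Cov(⟪φ(x),μ_y⟫, ⟪φ(x),μ_z⟫) − 2 Cov(⟪φ(z),μ_z⟫, ⟪μ_x,φ(z)⟫), where all variances and covariances are taken under (x,y,z) ∼ P_x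 ⊗ P_y ⊗ P_z. -/
/-!
`D` splits as `f x + g y + h z`, one summand per independent coordinate, with
`f = ⟪φ ·, μ_z⟫ - ⟪φ ·, μ_y⟫`, `g = ⟪φ ·, μ_y⟫ - ⟪μ_x, φ ·⟫` and `h = ⟪μ_x, φ ·⟫ - ⟪φ ·, μ_z⟫`.
Independence kills the cross covariances, so `Var D = Var f + Var g + Var h`, and each of the
three variances of a difference expands as `Var a - 2 Cov(a, b) + Var b`.
-/

open MeasureTheory ProbabilityTheory
open scoped RealInnerProductSpace

lemma MeasureTheory.MeasurePreserving.variance_fun_sub_eq_comp {Ω Ω' : Type*} [MeasurableSpace Ω]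
    [MeasurableSpace Ω'] {μ : Measure Ω} {ν : Measure Ω'} [IsFiniteMeasure ν] {T : Ω → Ω'}
    (hT : MeasurePreserving T μ ν) {a b : Ω' → ℝ} (ha : MemLp a 2 ν) (hb : MemLp b 2 ν) :
    Var[fun x ↦ a x - b x; ν] =
      Var[fun ω ↦ a (T ω); μ] - 2 * cov[fun ω ↦ a (T ω), fun ω ↦ b (T ω); μ]
        + Var[fun ω ↦ b (T ω); μ] := by
  rw [variance_fun_sub ha hb, hT.variance_fun_comp ha.aemeasurable,
    hT.variance_fun_comp hb.aemeasurable,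
    hT.hasLaw.covariance_fun_comp ha.aemeasurable hb.aemeasurable]

namespace ProbabilityTheory

variable {α β γ : Type*} [MeasurableSpace α] [MeasurableSpace β] [MeasurableSpace γ]
  {μa : Measure α} {μb : Measure β} {μc : Measure γ}
  [IsProbabilityMeasure μa] [IsProbabilityMeasure μb] [IsProbabilityMeasure μc]

lemma variance_add_add_prod {f : α → ℝ} {g : β → ℝ} {h : γ → ℝ}
    (hf : MemLp f 2 μa) (hg : MemLp g 2 μb) (hh : MemLp h 2 μc) :
    Var[fun w ↦ f w.1 + (g w.2.1 + h w.2.2); μa.prod (μb.prod μc)] =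
      Var[f; μa] + Var[g; μb] + Var[h; μc] := by
  have hgh : MemLp (fun p : β × γ ↦ g p.1 + h p.2) 2 (μb.prod μc) :=
    (hg.comp_fst μc).add (hh.comp_snd μb)
  rw [variance_add_prod hf hgh, variance_add_prod hg hh, add_assoc]

lemma variance_sub_add_sub_add_sub_prod {a a' : α → ℝ} {b b' : β → ℝ} {c c' : γ → ℝ}
    (ha : MemLp a 2 μa) (ha' : MemLp a' 2 μa) (hb : MemLp b 2 μb) (hb' : MemLp b' 2 μb)
    (hc : MemLp c 2 μc) (hc' : MemLp c' 2 μc) :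
    Var[fun w ↦ (a w.1 - a' w.1) + ((b w.2.1 - b' w.2.1) + (c w.2.2 - c' w.2.2));
        μa.prod (μb.prod μc)] =
      (Var[fun w ↦ a w.1; μa.prod (μb.prod μc)]
        - 2 * cov[fun w ↦ a w.1, fun w ↦ a' w.1; μa.prod (μb.prod μc)]
        + Var[fun w ↦ a' w.1; μa.prod (μb.prod μc)])
      + (Var[fun w ↦ b w.2.1; μa.prod (μb.prod μc)]
        - 2 * cov[fun w ↦ b w.2.1, fun w ↦ b' w.2.1; μa.prod (μb.prod μc)]
        + Var[fun w ↦ b' w.2.1; μa.prod (μb.prod μc)])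
      + (Var[fun w ↦ c w.2.2; μa.prod (μb.prod μc)]
        - 2 * cov[fun w ↦ c w.2.2, fun w ↦ c' w.2.2; μa.prod (μb.prod μc)]
        + Var[fun w ↦ c' w.2.2; μa.prod (μb.prod μc)]) := by
  have hπ₁ : MeasurePreserving (fun w : α × β × γ ↦ w.1) (μa.prod (μb.prod μc)) μa :=
    measurePreserving_fst
  have hπ₂ : MeasurePreserving (fun w : α × β × γ ↦ w.2.1) (μa.prod (μb.prod μc)) μb :=
    measurePreserving_fst.comp measurePreserving_snd
  have hπ₃ : MeasurePreserving (fun w : α × β × γ ↦ w.2.2) (μa.prod (μb.prod μc)) μc :=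
    measurePreserving_snd.comp measurePreserving_snd
  rw [variance_add_add_prod (f := fun x ↦ a x - a' x) (g := fun y ↦ b y - b' y)
      (h := fun z ↦ c z - c' z) (ha.sub ha') (hb.sub hb') (hc.sub hc'),
    hπ₁.variance_fun_sub_eq_comp ha ha', hπ₂.variance_fun_sub_eq_comp hb hb',
    hπ₃.variance_fun_sub_eq_comp hc hc']

end ProbabilityTheory

theorem stmt_17_general
    {Hb : Type*} [NormedAddCommGroup Hb] [InnerProductSpace ℝ Hb]
    {S : Type*} [MeasurableSpace S]
    (φ : S → Hb) (hφ : StronglyMeasurable φ)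
    (Px Py Pz : Measure S)
    [IsProbabilityMeasure Px] [IsProbabilityMeasure Py] [IsProbabilityMeasure Pz]
    (hPx2 : MemLp (fun a => ‖φ a‖) 2 Px) (hPy2 : MemLp (fun a => ‖φ a‖) 2 Py)
    (hPz2 : MemLp (fun a => ‖φ a‖) 2 Pz)
    (μx μy μz : Hb)
    (μ : Measure (S × S × S)) (hμ : μ = Px.prod (Py.prod Pz))
    (Var : (S × S × S → ℝ) → ℝ)
    (hVar : ∀ f : S × S × S → ℝ, Var f = ∫ w, (f w - ∫ w', f w' ∂μ) ^ 2 ∂μ)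
    (Cov : (S × S × S → ℝ) → (S × S × S → ℝ) → ℝ)
    (hCov : ∀ f g : S × S × S → ℝ,
      Cov f g = ∫ w, (f w - ∫ w', f w' ∂μ) * (g w - ∫ w', g w' ∂μ) ∂μ)
    (D : S × S × S → ℝ)
    (hD : ∀ w : S × S × S,
      D w = (⟪φ w.2.1, μy⟫ - ⟪φ w.1, μy⟫ - ⟪μx, φ w.2.1⟫)
            - (⟪φ w.2.2, μz⟫ - ⟪φ w.1, μz⟫ - ⟪μx, φ w.2.2⟫)) :
    Var D =
      Var (fun w => ⟪φ w.2.1, μy⟫) + Var (fun w => ⟪φ w.1, μy⟫)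
        + Var (fun w => ⟪μx, φ w.2.1⟫)
        + Var (fun w => ⟪φ w.2.2, μz⟫) + Var (fun w => ⟪φ w.1, μz⟫)
        + Var (fun w => ⟪μx, φ w.2.2⟫)
        - 2 * Cov (fun w => ⟪φ w.2.1, μy⟫) (fun w => ⟪μx, φ w.2.1⟫)
        - 2 * Cov (fun w => ⟪φ w.1, μy⟫) (fun w => ⟪φ w.1, μz⟫)
        - 2 * Cov (fun w => ⟪φ w.2.2, μz⟫) (fun w => ⟪μx, φ w.2.2⟫) := by
  subst hμ
  have hVar' (f : S × S × S → ℝ) (hf : AEMeasurable f (Px.prod (Py.prod Pz))) :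
      Var f = Var[f; Px.prod (Py.prod Pz)] :=
    (hVar f).trans (variance_eq_integral hf).symm
  have hCov' (f g : S × S × S → ℝ) : Cov f g = cov[f, g; Px.prod (Py.prod Pz)] := hCov f g
  have hφL2 {P : Measure S} (hP : MemLp (fun a => ‖φ a‖) 2 P) : MemLp φ 2 P :=
    (memLp_norm_iff hφ.aestronglyMeasurable).mp hP
  obtain rfl : D = fun w => (⟪φ w.1, μz⟫ - ⟪φ w.1, μy⟫)
      + ((⟪φ w.2.1, μy⟫ - ⟪μx, φ w.2.1⟫) + (⟪μx, φ w.2.2⟫ - ⟪φ w.2.2, μz⟫)) :=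
    funext fun w => by rw [hD]; ring
  rw [hVar', hVar', hVar', hVar', hVar', hVar', hVar', hCov', hCov', hCov',
    variance_sub_add_sub_add_sub_prod ((hφL2 hPx2).inner_const μz) ((hφL2 hPx2).inner_const μy)
      ((hφL2 hPy2).inner_const μy) ((hφL2 hPy2).const_inner μx)
      ((hφL2 hPz2).const_inner μx) ((hφL2 hPz2).inner_const μz),
    covariance_comm (X := fun w : S × S × S => ⟪φ w.1, μz⟫),
    covariance_comm (X := fun w : S × S × S => ⟪μx, φ w.2.2⟫)]
  · ring
  all_goals exact StronglyMeasurable.aemeasurable (by fun_prop)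

/-- **Variance expansion of the first projection of the difference of two MMD
U-statistic kernels** (appendix, Eq. 40). With `(x,y,z) ∼ P_x ⊗ P_y ⊗ P_z` and
`D = (⟪φ(y),μ_y⟫ − ⟪φ(x),μ_y⟫ − ⟪μ_x,φ(y)⟫) − (⟪φ(z),μ_z⟫ − ⟪φ(x),μ_z⟫ − ⟪μ_x,φ(z)⟫)`,
`Var(D)` equals the sum of the six individual variances minus twice the three displayed
covariances. -/
theorem stmt_17
    {Hb : Type*} [NormedAddCommGroup Hb] [InnerProductSpace ℝ Hb] [CompleteSpace Hb]
    {S : Type*} [MeasurableSpace S]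
    (φ : S → Hb) (hφ : StronglyMeasurable φ)
    (Px Py Pz : Measure S)
    [IsProbabilityMeasure Px] [IsProbabilityMeasure Py] [IsProbabilityMeasure Pz]
    (hPx2 : MemLp (fun a => ‖φ a‖) 2 Px) (hPy2 : MemLp (fun a => ‖φ a‖) 2 Py)
    (hPz2 : MemLp (fun a => ‖φ a‖) 2 Pz)
    (μx μy μz : Hb)
    (hμx : μx = ∫ a, φ a ∂Px) (hμy : μy = ∫ a, φ a ∂Py) (hμz : μz = ∫ a, φ a ∂Pz)
    (μ : Measure (S × S × S)) (hμ : μ = Px.prod (Py.prod Pz))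
    (Var : (S × S × S → ℝ) → ℝ)
    (hVar : ∀ f : S × S × S → ℝ, Var f = ∫ w, (f w - ∫ w', f w' ∂μ) ^ 2 ∂μ)
    (Cov : (S × S × S → ℝ) → (S × S × S → ℝ) → ℝ)
    (hCov : ∀ f g : S × S × S → ℝ,
      Cov f g = ∫ w, (f w - ∫ w', f w' ∂μ) * (g w - ∫ w', g w' ∂μ) ∂μ)
    (D : S × S × S → ℝ)
    (hD : ∀ w : S × S × S,
      D w = (⟪φ w.2.1, μy⟫ - ⟪φ w.1, μy⟫ - ⟪μx, φ w.2.1⟫)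
            - (⟪φ w.2.2, μz⟫ - ⟪φ w.1, μz⟫ - ⟪μx, φ w.2.2⟫)) :
    Var D =
      Var (fun w => ⟪φ w.2.1, μy⟫) + Var (fun w => ⟪φ w.1, μy⟫)
        + Var (fun w => ⟪μx, φ w.2.1⟫)
        + Var (fun w => ⟪φ w.2.2, μz⟫) + Var (fun w => ⟪φ w.1, μz⟫)
        + Var (fun w => ⟪μx, φ w.2.2⟫)
        - 2 * Cov (fun w => ⟪φ w.2.1, μy⟫) (fun w => ⟪μx, φ w.2.1⟫)
        - 2 * Cov (fun w => ⟪φ w.1, μy⟫) (fun w => ⟪φ w.1, μz⟫)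
        - 2 * Cov (fun w => ⟪φ w.2.2, μz⟫) (fun w => ⟪μx, φ w.2.2⟫) :=
  stmt_17_general φ hφ Px Py Pz hPx2 hPy2 hPz2 μx μy μz μ hμ Var hVar Cov hCov D hD
end

section
/- Let X and Y be measurable spaces, k : X × X → ℝ and l : Y × Y → ℝ bounded symmetric measurable kernels, and P a probability measure on X × Y with marginals P_x and P_y. Define the product kernel v((x,y),(x',y')) := k(x,x')·l(y,y') on (X × Y) × (X × Y). Then E_{(w,w') ∼ P ⊗ P}[v(w,w')] − 2 E_{(w,w') ∼ P ⊗ (P_x ⊗ P_y)}[v(w,w')] + E_{(w,w') ∼ (P_x ⊗ P_y) ⊗ (P_x ⊗ P_y)}[v(w,w')] = HSIC(k, l; P); that is, MMD²(v; P, P_x ⊗ P_y) = HSIC(k, l; P). -/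
open MeasureTheory ProbabilityTheory

/-- **HSIC as a squared MMD under the product kernel** (Section 5).
For `P` on `X × Y` with marginals `P_x`, `P_y` and the product kernel
`v((x,y),(x',y')) = k(x,x')·l(y,y')`,
`MMD²(v; P, P_x ⊗ P_y) = HSIC(k, l; P)`. -/
theorem stmt_18
    {X Y : Type*} [MeasurableSpace X] [MeasurableSpace Y]
    (k : X × X → ℝ) (l : Y × Y → ℝ)
    (hk_meas : Measurable k) (hl_meas : Measurable l)
    (hk_bdd : ∃ C : ℝ, ∀ p, |k p| ≤ C) (hl_bdd : ∃ C : ℝ, ∀ p, |l p| ≤ C)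
    (hk_symm : ∀ a b : X, k (a, b) = k (b, a)) (hl_symm : ∀ a b : Y, l (a, b) = l (b, a))
    (P : Measure (X × Y)) [IsProbabilityMeasure P]
    (Px : Measure X) (Py : Measure Y)
    (hPx : Px = P.map Prod.fst) (hPy : Py = P.map Prod.snd)
    (v : (X × Y) × (X × Y) → ℝ)
    (hv : ∀ w : (X × Y) × (X × Y), v w = k (w.1.1, w.2.1) * l (w.1.2, w.2.2))
    (HSIC : ℝ)
    (hHSIC : HSIC =
      (∫ w : (X × Y) × (X × Y), k (w.1.1, w.2.1) * l (w.1.2, w.2.2) ∂(P.prod P))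
      + (∫ p, k p ∂(Px.prod Px)) * (∫ p, l p ∂(Py.prod Py))
      - 2 * ∫ w : X × Y, (∫ x', k (w.1, x') ∂Px) * (∫ y', l (w.2, y') ∂Py) ∂P) :
    (∫ w, v w ∂(P.prod P)) - 2 * (∫ w, v w ∂(P.prod (Px.prod Py)))
        + (∫ w, v w ∂((Px.prod Py).prod (Px.prod Py)))
      = HSIC := by
  obtain ⟨Ck, hCk⟩ := hk_bdd
  obtain ⟨Cl, hCl⟩ := hl_bdd
  have hPxP : IsProbabilityMeasure Px := hPx ▸ Measure.isProbabilityMeasure_map measurable_fst.aemeasurable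
  have hPyP : IsProbabilityMeasure Py := hPy ▸ Measure.isProbabilityMeasure_map measurable_snd.aemeasurable
  have hk_int : ∀ (μ : Measure X) [IsProbabilityMeasure μ], Integrable k (μ.prod μ) := by
    intro μ _
    exact (integrable_const |Ck|).mono' hk_meas.aestronglyMeasurable
      (Filter.Eventually.of_forall fun p => (hCk p).trans (le_abs_self Ck))
  have hl_int : ∀ (μ : Measure Y) [IsProbabilityMeasure μ], Integrable l (μ.prod μ) := by
    intro μ _
    exact (integrable_const |Cl|).mono' hl_meas.aestronglyMeasurable
      (Filter.Eventually.of_forall fun p => (hCl p).trans (le_abs_self Cl))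
  have hmeas : Measurable (fun w : (X × Y) × (X × Y) => k (w.1.1, w.2.1) * l (w.1.2, w.2.2)) := by
    exact (hk_meas.comp ((measurable_fst.fst).prodMk (measurable_snd.fst))).mul
      (hl_meas.comp ((measurable_fst.snd).prodMk (measurable_snd.snd)))
  have hbound : ∀ w : (X × Y) × (X × Y),
      ‖k (w.1.1, w.2.1) * l (w.1.2, w.2.2)‖ ≤ |Ck| * |Cl| := by
    intro w
    rw [Real.norm_eq_abs, abs_mul]
    exact mul_le_mul ((hCk _).trans (le_abs_self Ck)) ((hCl _).trans (le_abs_self Cl))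
      (abs_nonneg _) (abs_nonneg _)
  have hint : ∀ (μ ν : Measure (X × Y)) [IsProbabilityMeasure μ] [IsProbabilityMeasure ν],
      Integrable (fun w : (X × Y) × (X × Y) => k (w.1.1, w.2.1) * l (w.1.2, w.2.2)) (μ.prod ν) := by
    intro μ ν _ _
    exact (integrable_const (|Ck| * |Cl|)).mono' hmeas.aestronglyMeasurable
      (Filter.Eventually.of_forall hbound)
  simp only [hv, hHSIC]
  have h2 : (∫ w : (X × Y) × (X × Y), k (w.1.1, w.2.1) * l (w.1.2, w.2.2)
      ∂(P.prod (Px.prod Py)))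
      = ∫ w : X × Y, (∫ x', k (w.1, x') ∂Px) * (∫ y', l (w.2, y') ∂Py) ∂P := by
    rw [integral_prod _ (hint P (Px.prod Py))]
    refine integral_congr_ae (Filter.Eventually.of_forall fun w => ?_)
    exact integral_prod_mul (μ := Px) (ν := Py) (fun x' => k (w.1, x')) (fun y' => l (w.2, y'))
  have h3 : (∫ w : (X × Y) × (X × Y), k (w.1.1, w.2.1) * l (w.1.2, w.2.2)
      ∂((Px.prod Py).prod (Px.prod Py)))
      = (∫ p, k p ∂(Px.prod Px)) * (∫ p, l p ∂(Py.prod Py)) := by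
    rw [integral_prod _ (hint (Px.prod Py) (Px.prod Py))]
    have step1 : ∀ w : X × Y,
        (∫ z : X × Y, k (w.1, z.1) * l (w.2, z.2) ∂(Px.prod Py))
        = (∫ x', k (w.1, x') ∂Px) * (∫ y', l (w.2, y') ∂Py) := fun w =>
      integral_prod_mul (μ := Px) (ν := Py) (fun x' => k (w.1, x')) (fun y' => l (w.2, y'))
    calc (∫ w : X × Y, ∫ z : X × Y, k (w.1, z.1) * l (w.2, z.2) ∂(Px.prod Py) ∂(Px.prod Py))
        = ∫ w : X × Y, (∫ x', k (w.1, x') ∂Px) * (∫ y', l (w.2, y') ∂Py) ∂(Px.prod Py) := by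
          exact integral_congr_ae (Filter.Eventually.of_forall fun w => step1 w)
      _ = (∫ x, ∫ x', k (x, x') ∂Px ∂Px) * (∫ y, ∫ y', l (y, y') ∂Py ∂Py) :=
          integral_prod_mul (μ := Px) (ν := Py)
            (fun x => ∫ x', k (x, x') ∂Px) (fun y => ∫ y', l (y, y') ∂Py)
      _ = (∫ p, k p ∂(Px.prod Px)) * (∫ p, l p ∂(Py.prod Py)) := by
          rw [integral_prod _ (hk_int Px), integral_prod _ (hl_int Py)]
  rw [h2, h3]
  ring
end
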